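/- For every n ≥ 1: ‖Δs_n‖₂² ≤ (1 + χ^{−1}·C²)·‖p_{n−1}‖₂². -/

import Mathlib

/-!
Let `f = 𝒢 p_{n-1}`. Since `Δ f = p_{n-1}` is monic of degree `n - 1`, linear independence of
the `P_k` forces `f` to be monic of degree `n`. The monic Sobolev orthogonal polynomial `s_n`
minimises the Sobolev norm among monic polynomials of degree `n`, so
`χ‖Δ s_n‖² ≤ ‖s_n‖_S² ≤ ‖f‖_S² = ‖𝒢 p_{n-1}‖² + χ‖p_{n-1}‖² ≤ (C² + χ)‖p_{n-1}‖²`.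
-/

open Filter RealInnerProductSpace

variable {H : Type*} [NormedAddCommGroup H] [InnerProductSpace ℝ H]

/-- `Wlt P n` is the span of `P 0, …, P (n-1)`; thus `Wlt P 0 = ⊥ = W_{-1}` and
`Wlt P (n+1)` is the space `W_n = span{P_0, …, P_n}`. -/
def Wlt (P : ℕ → H) (n : ℕ) : Submodule ℝ H := Submodule.span ℝ (P '' Set.Iio n)

/-- `Wtot P` is the space `W = ⋃ₙ Wₙ` of all polynomials. -/
def Wtot (P : ℕ → H) : Submodule ℝ H := Submodule.span ℝ (Set.range P)

/-- The Sobolev inner product `⟨f, g⟩_S = ⟨f, g⟩₂ + χ⟨Δf, Δg⟩₂`. -/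
noncomputable def innerS (Δ : H →ₗ[ℝ] H) (χ : ℝ) (f g : H) : ℝ :=
  ⟪ f, g ⟫ + χ * ⟪ Δ f, Δ g ⟫

/-- The Sobolev norm `‖f‖_S = √(‖f‖₂² + χ‖Δf‖₂²)`. -/
noncomputable def normS (Δ : H →ₗ[ℝ] H) (χ : ℝ) (f : H) : ℝ :=
  Real.sqrt (‖f‖ ^ 2 + χ * ‖Δ f‖ ^ 2)

section Wlt

variable (P : ℕ → H)

lemma Wlt_mono {m n : ℕ} (h : m ≤ n) : Wlt P m ≤ Wlt P n :=
  Submodule.span_mono (Set.image_mono (Set.Iio_subset_Iio h))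

lemma Wlt_le_Wtot (n : ℕ) : Wlt P n ≤ Wtot P :=
  Submodule.span_mono (Set.image_subset_range _ _)

lemma apply_mem_Wlt {i n : ℕ} (h : i < n) : P i ∈ Wlt P n :=
  Submodule.subset_span ⟨i, h, rfl⟩

lemma mem_Wlt_succ_iff {n : ℕ} {u : H} :
    u ∈ Wlt P (n + 1) ↔ ∃ a : ℝ, ∃ r ∈ Wlt P n, u = a • P n + r := by
  rw [Wlt, Set.Iio_add_one_eq_Iic, ← Set.Iio_insert, Set.image_insert_eq, Submodule.mem_span_insert]
  rfl

lemma mem_Wlt_succ_of_sub_mem {n : ℕ} {u : H} (h : u - P n ∈ Wlt P n) : u ∈ Wlt P (n + 1) := by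
  simpa using add_mem (Wlt_mono P n.le_succ h) (apply_mem_Wlt P n.lt_succ_self)

lemma map_mem_Wlt_of_mem_Wlt_succ {Δ : H →ₗ[ℝ] H}
    (hΔ0 : Δ (P 0) = 0) (hΔsucc : ∀ n, Δ (P (n + 1)) = P n) {n : ℕ} {u : H}
    (hu : u ∈ Wlt P (n + 1)) : Δ u ∈ Wlt P n := by
  suffices Submodule.map Δ (Wlt P (n + 1)) ≤ Wlt P n from this ⟨u, hu, rfl⟩
  rw [Wlt, Submodule.map_span_le]
  rintro _ ⟨_ | i, hi, rfl⟩
  · simp [hΔ0]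
  · rw [hΔsucc]
    exact apply_mem_Wlt P (by simpa using hi)

lemma sub_apply_succ_mem_Wlt_of_map_sub_mem (hP : LinearIndependent ℝ P) {Δ : H →ₗ[ℝ] H}
    (hΔ0 : Δ (P 0) = 0) (hΔsucc : ∀ n, Δ (P (n + 1)) = P n) {n : ℕ} {u : H}
    (hu : u ∈ Wlt P (n + 2)) (hΔu : Δ u - P n ∈ Wlt P n) : u - P (n + 1) ∈ Wlt P (n + 1) := by
  obtain ⟨a, r, hr, rfl⟩ := (mem_Wlt_succ_iff P).mp hu
  have hΔr : Δ r ∈ Wlt P n := map_mem_Wlt_of_mem_Wlt_succ P hΔ0 hΔsucc hr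
  have ha : a = 1 := by
    by_contra ha
    have hsmul : (a - 1) • P n ∈ Wlt P n := by
      have h := sub_mem hΔu hΔr
      rw [map_add, map_smul, hΔsucc, add_sub_right_comm, add_sub_cancel_right] at h
      rwa [sub_smul, one_smul]
    exact hP.notMem_span_image Set.self_notMem_Iio <|
      (Submodule.smul_mem_iff _ (sub_ne_zero.mpr ha)).mp hsmul
  simpa [ha] using hr

end Wlt

lemma sobolev_norm_sq_add (Δ : H →ₗ[ℝ] H) (χ : ℝ) (s d : H) :
    ‖s + d‖ ^ 2 + χ * ‖Δ (s + d)‖ ^ 2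
      = ‖s‖ ^ 2 + χ * ‖Δ s‖ ^ 2 + 2 * innerS Δ χ s d + (‖d‖ ^ 2 + χ * ‖Δ d‖ ^ 2) := by
  rw [innerS, map_add, norm_add_sq_real, norm_add_sq_real]
  ring

lemma sobolev_norm_sq_le_of_innerS_eq_zero {Δ : H →ₗ[ℝ] H} {χ : ℝ} (hχ : 0 ≤ χ) {s d : H}
    (hsd : innerS Δ χ s d = 0) :
    ‖s‖ ^ 2 + χ * ‖Δ s‖ ^ 2 ≤ ‖s + d‖ ^ 2 + χ * ‖Δ (s + d)‖ ^ 2 := by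
  rw [sobolev_norm_sq_add, hsd]
  nlinarith [sq_nonneg ‖d‖, mul_nonneg hχ (sq_nonneg ‖Δ d‖)]

theorem statement10_general
    (P : ℕ → H) (hP : LinearIndependent ℝ P)
    (Δ G : H →ₗ[ℝ] H)
    (hΔ0 : Δ (P 0) = 0) (hΔsucc : ∀ n, Δ (P (n + 1)) = P n)
    (hGinv : ∀ u ∈ Wtot P, Δ (G u) = u)
    (hGmap : ∀ n, ∀ u ∈ Wlt P (n + 1), G u ∈ Wlt P (n + 2))
    (C : ℝ)
    (hGbound : ∀ u ∈ Wtot P, ‖G u‖ ≤ C * ‖u‖)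
    (χ : ℝ) (hχ : 0 < χ)
    (p : ℕ → H)
    (hpmonic : ∀ n, p n - P n ∈ Wlt P n)
    (s : ℕ → H)
    (hsmonic : ∀ n, s n - P n ∈ Wlt P n)
    (hsortho : ∀ n, ∀ w ∈ Wlt P n, innerS Δ χ (s n) w = 0)
    : ∀ n, 1 ≤ n →
      ‖Δ (s n)‖ ^ 2 ≤ (1 + χ⁻¹ * C ^ 2) * ‖p (n - 1)‖ ^ 2 := by
  intro n hn
  obtain ⟨m, rfl⟩ : ∃ m, n = m + 1 := ⟨n - 1, by omega⟩
  rw [Nat.add_sub_cancel]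
  have hp : p m ∈ Wlt P (m + 1) := mem_Wlt_succ_of_sub_mem P (hpmonic m)
  have hΔf : Δ (G (p m)) = p m := hGinv _ (Wlt_le_Wtot P _ hp)
  have hf_monic : G (p m) - P (m + 1) ∈ Wlt P (m + 1) :=
    sub_apply_succ_mem_Wlt_of_map_sub_mem P hP hΔ0 hΔsucc (hGmap m _ hp)
      (by rw [hΔf]; exact hpmonic m)
  have hfs : G (p m) - s (m + 1) ∈ Wlt P (m + 1) := by
    simpa using sub_mem hf_monic (hsmonic (m + 1))
  have hGp : ‖G (p m)‖ ^ 2 ≤ C ^ 2 * ‖p m‖ ^ 2 := by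
    rw [← mul_pow]
    exact pow_le_pow_left₀ (norm_nonneg _) (hGbound _ (Wlt_le_Wtot P _ hp)) 2
  have hmin : ‖s (m + 1)‖ ^ 2 + χ * ‖Δ (s (m + 1))‖ ^ 2 ≤ ‖G (p m)‖ ^ 2 + χ * ‖p m‖ ^ 2 := by
    have h := sobolev_norm_sq_le_of_innerS_eq_zero hχ.le (hsortho _ _ hfs)
    rwa [add_sub_cancel, hΔf] at h
  rw [add_mul, one_mul, mul_assoc, ← sub_le_iff_le_add', le_inv_mul_iff₀ hχ]
  nlinarith [sq_nonneg ‖s (m + 1)‖]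

/-- For `n ≥ 1`: `‖Δs_n‖₂² ≤ (1 + χ⁻¹C²)‖p_{n−1}‖₂²`. -/
theorem statement10
    (P : ℕ → H) (hP : LinearIndependent ℝ P)
    (Δ G : H →ₗ[ℝ] H)
    (hΔ0 : Δ (P 0) = 0) (hΔsucc : ∀ n, Δ (P (n + 1)) = P n)
    (hGsym : ∀ u ∈ Wtot P, ∀ v ∈ Wtot P, ⟪ G u, v ⟫ = ⟪ u, G v ⟫)
    (hGinv : ∀ u ∈ Wtot P, Δ (G u) = u)
    (hGmap : ∀ n, ∀ u ∈ Wlt P (n + 1), G u ∈ Wlt P (n + 2))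
    (C : ℝ) (hC : 0 < C)
    (hGbound : ∀ u ∈ Wtot P, ‖G u‖ ≤ C * ‖u‖)
    (χ : ℝ) (hχ : 0 < χ)
    (p : ℕ → H)
    (hpmonic : ∀ n, p n - P n ∈ Wlt P n)
    (hportho : ∀ n, ∀ w ∈ Wlt P n, ⟪ p n, w ⟫ = 0)
    (s : ℕ → H)
    (hsmonic : ∀ n, s n - P n ∈ Wlt P n)
    (hsortho : ∀ n, ∀ w ∈ Wlt P n, innerS Δ χ (s n) w = 0)
    : ∀ n, 1 ≤ n →
      ‖Δ (s n)‖ ^ 2 ≤ (1 + χ⁻¹ * C ^ 2) * ‖p (n - 1)‖ ^ 2 :=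
  statement10_general P hP Δ G hΔ0 hΔsucc hGinv hGmap C hGbound χ hχ p hpmonic s hsmonic hsortho
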